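/- Let C be a real symmetric positive-definite 3×3 matrix with spectral decomposition C = Σ_a λ_a² N_a N_aᵀ, with {N_a} an orthonormal basis of ℝ³ and the λ_a > 0 pairwise distinct. Let M ≥ 1, and for each α = 1,…,M let Γ^α be a real symmetric positive-definite 3×3 matrix with spectral decomposition Γ^α = Σ_a (Γ^α_a)² N̄^α_a (N̄^α_a)ᵀ, with {N̄^α_a} orthonormal and the Γ^α_a > 0 pairwise distinct; let E^α and E^{v,α} be differentiable functions (0,∞) → ℝ with everywhere positive derivative, let 𝕼^α be the projection operator associated with (λ_a; N_a; E^α) and 𝕼^{v,α} the projection operator associated with (Γ^α_a; N̄^α_a; E^{v,α}). If symmetric 3×3 matrices T^α satisfy 𝕼^{v,α}(T^α) = 0 for every α = 1,…,M (the equilibrium conditions Q^α = O), then each T^α = 0, and consequently the total non-equilibrium stress S^neq := Σ_{α=1}^M 𝕼^α(T^α) vanishes: S^neq = O. -/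

import Mathlib

/-!
In the orthonormal frame `V`, the `(k, l)` entry `V kᵀ 𝕼(A) V l` of `𝕼(A)` (for `k ≤ l`) is the
entry `V kᵀ A V l` times `f'(a k) / a k` or `2 (f (a k) - f (a l)) / (a k² - a l²)`. Both
coefficients are positive because `f` is strictly increasing on `(0, ∞)`, so `𝕼^{v,α}(T^α) = 0`
kills every entry of the symmetric `T^α`, hence `T^α = 0`, and the sum of `𝕼^α(T^α)` is then
trivially `0`.
-/

open Matrix Finset

/-- The projection operator of Hill's framework associated with principal values `a`,
principal directions `V`, a scale function `f` and its derivative `f'`. -/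
noncomputable def projOp (a : Fin 3 → ℝ) (V : Fin 3 → Fin 3 → ℝ) (f f' : ℝ → ℝ)
    (A : Matrix (Fin 3) (Fin 3) ℝ) : Matrix (Fin 3) (Fin 3) ℝ :=
  (∑ i, ((f' (a i) / a i) * (V i ⬝ᵥ A *ᵥ V i)) • vecMulVec (V i) (V i)) +
    ∑ i, ∑ j ∈ univ.filter (fun j => i < j),
      ((2 * (f (a i) - f (a j)) / ((a i) ^ 2 - (a j) ^ 2)) * (V i ⬝ᵥ A *ᵥ V j)) •
        (vecMulVec (V i) (V j) + vecMulVec (V j) (V i))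

theorem Matrix.IsSymm.dotProduct_mulVec_comm {n R : Type*} [Fintype n] [CommSemiring R]
    {A : Matrix n n R} (hA : A.IsSymm) (u w : n → R) : u ⬝ᵥ A *ᵥ w = w ⬝ᵥ A *ᵥ u := by
  rw [dotProduct_mulVec, ← mulVec_transpose, hA.eq, dotProduct_comm]

theorem Matrix.eq_zero_of_forall_dotProduct_mulVec_eq_zero {n R : Type*} [Fintype n]
    [DecidableEq n] [CommRing R] {V : n → n → R}
    (hV : ∀ i j, V i ⬝ᵥ V j = if i = j then (1 : R) else 0) {A : Matrix n n R}
    (hA : ∀ k l, V k ⬝ᵥ A *ᵥ V l = 0) : A = 0 := by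
  set P : Matrix n n R := Matrix.of V
  have hPPt : P * Pᵀ = 1 := by
    ext i j
    rw [one_apply]
    exact hV i j
  have hPAPt : P * A * Pᵀ = 0 := by
    ext k l
    rw [zero_apply, ← hA k l, dotProduct_mulVec]
    rfl
  calc A = (Pᵀ * P) * A * (Pᵀ * P) := by
        rw [mul_eq_one_comm.mp hPPt, Matrix.one_mul, Matrix.mul_one]
    _ = Pᵀ * (P * A * Pᵀ) * P := by simp only [Matrix.mul_assoc]
    _ = 0 := by rw [hPAPt, Matrix.mul_zero, Matrix.zero_mul]

theorem strictMonoOn_Ioi_of_hasDerivAt_pos {f f' : ℝ → ℝ} {c : ℝ}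
    (hf : ∀ x, c < x → HasDerivAt f (f' x) x) (hf' : ∀ x, c < x → 0 < f' x) :
    StrictMonoOn f (Set.Ioi c) :=
  strictMonoOn_of_hasDerivWithinAt_pos (convex_Ioi c)
    (fun x hx => (hf x hx).continuousAt.continuousWithinAt)
    (fun x hx => (hf x (by simpa using hx)).hasDerivWithinAt)
    (fun x hx => hf' x (by simpa using hx))

theorem StrictMonoOn.sub_div_sq_sub_sq_pos {f : ℝ → ℝ} (hf : StrictMonoOn f (Set.Ioi 0))
    {x y : ℝ} (hx : 0 < x) (hy : 0 < y) (hxy : x ≠ y) : 0 < (f x - f y) / (x ^ 2 - y ^ 2) := by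
  rcases hxy.lt_or_gt with h | h
  · exact div_pos_of_neg_of_neg (sub_neg.2 (hf hx hy h)) (by nlinarith)
  · exact div_pos (sub_pos.2 (hf hy hx h)) (by nlinarith)

theorem dotProduct_vecMulVec_mulVec {n R : Type*} [Fintype n] [CommSemiring R]
    (u x y w : n → R) : u ⬝ᵥ vecMulVec x y *ᵥ w = (x ⬝ᵥ u) * (y ⬝ᵥ w) := by
  rw [vecMulVec_mulVec, op_smul_eq_smul, dotProduct_smul, smul_eq_mul, mul_comm, dotProduct_comm]

theorem Fin.sum_sum_lt_ite_eq {n : ℕ} {R : Type*} [AddCommMonoid R] (g : Fin n → Fin n → R)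
    (p q : Fin n) :
    ∑ i, ∑ j with i < j, (if i = p then if j = q then g i j else 0 else 0) =
      if p < q then g p q else 0 := by
  rw [Finset.sum_eq_single p (fun i _ hi => Finset.sum_eq_zero fun j _ => by simp [hi])
    (by simp)]
  simp

theorem Fin.sum_sum_lt_ite_eq' {n : ℕ} {R : Type*} [AddCommMonoid R] (g : Fin n → Fin n → R)
    (p q : Fin n) :
    ∑ i, ∑ j with i < j, (if j = q then if i = p then g i j else 0 else 0) =
      if p < q then g p q else 0 := by
  simp_rw [← ite_and, and_comm (a := _ = q), ite_and]
  exact Fin.sum_sum_lt_ite_eq g p q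

section projOp

variable (a : Fin 3 → ℝ) {V : Fin 3 → Fin 3 → ℝ} (f f' : ℝ → ℝ)
  (A : Matrix (Fin 3) (Fin 3) ℝ) (hV : ∀ i j, V i ⬝ᵥ V j = if i = j then (1 : ℝ) else 0)
include hV

theorem dotProduct_projOp_mulVec (k l : Fin 3) :
    V k ⬝ᵥ projOp a V f f' A *ᵥ V l =
      (if l = k then f' (a l) / a l * (V l ⬝ᵥ A *ᵥ V l) else 0) +
        ((if k < l then
            2 * (f (a k) - f (a l)) / (a k ^ 2 - a l ^ 2) * (V k ⬝ᵥ A *ᵥ V l) else 0) +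
          if l < k then
            2 * (f (a l) - f (a k)) / (a l ^ 2 - a k ^ 2) * (V l ⬝ᵥ A *ᵥ V k) else 0) := by
  simp only [projOp, add_mulVec, sum_mulVec, smul_mulVec, dotProduct_add, dotProduct_sum,
    dotProduct_smul, dotProduct_vecMulVec_mulVec, hV, mul_one, smul_eq_mul,
    mul_add, mul_ite, mul_zero, sum_add_distrib]
  rw [Fin.sum_sum_lt_ite_eq, Fin.sum_sum_lt_ite_eq']
  simp only [Finset.sum_ite_eq', mem_univ, if_true]

theorem dotProduct_projOp_mulVec_self (k : Fin 3) :
    V k ⬝ᵥ projOp a V f f' A *ᵥ V k = f' (a k) / a k * (V k ⬝ᵥ A *ᵥ V k) := by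
  simp [dotProduct_projOp_mulVec a f f' A hV]

theorem dotProduct_projOp_mulVec_of_lt {k l : Fin 3} (hkl : k < l) :
    V k ⬝ᵥ projOp a V f f' A *ᵥ V l =
      2 * (f (a k) - f (a l)) / (a k ^ 2 - a l ^ 2) * (V k ⬝ᵥ A *ᵥ V l) := by
  simp [dotProduct_projOp_mulVec a f f' A hV, hkl, hkl.ne', hkl.not_gt]

end projOp

theorem eq_zero_of_projOp_eq_zero {a : Fin 3 → ℝ} {V : Fin 3 → Fin 3 → ℝ}
    {f f' : ℝ → ℝ} (hV : ∀ i j, V i ⬝ᵥ V j = if i = j then (1 : ℝ) else 0) (hpos : ∀ i, 0 < a i)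
    (hdist : ∀ i j, i ≠ j → a i ≠ a j) (hf : ∀ x, 0 < x → HasDerivAt f (f' x) x)
    (hf' : ∀ x, 0 < x → 0 < f' x) {A : Matrix (Fin 3) (Fin 3) ℝ} (hA : A.IsSymm)
    (h : projOp a V f f' A = 0) : A = 0 := by
  have hdiag (k : Fin 3) : V k ⬝ᵥ A *ᵥ V k = 0 := by
    have hk := dotProduct_projOp_mulVec_self a f f' A hV k
    rw [h, zero_mulVec, dotProduct_zero, eq_comm] at hk
    exact (mul_eq_zero.1 hk).resolve_left (div_pos (hf' _ (hpos k)) (hpos k)).ne'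
  have hoff {k l : Fin 3} (hkl : k < l) : V k ⬝ᵥ A *ᵥ V l = 0 := by
    have hcoeff : 0 < (f (a k) - f (a l)) / (a k ^ 2 - a l ^ 2) :=
      (strictMonoOn_Ioi_of_hasDerivAt_pos hf hf').sub_div_sq_sub_sq_pos (hpos k) (hpos l)
        (hdist k l hkl.ne)
    have hkl' := dotProduct_projOp_mulVec_of_lt a f f' A hV hkl
    rw [h, zero_mulVec, dotProduct_zero, eq_comm, mul_div_assoc] at hkl'
    exact (mul_eq_zero.1 hkl').resolve_left (mul_pos two_pos hcoeff).ne'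
  refine eq_zero_of_forall_dotProduct_mulVec_eq_zero hV fun k l => ?_
  rcases lt_trichotomy k l with hkl | rfl | hkl
  · exact hoff hkl
  · exact hdiag k
  · rw [hA.dotProduct_mulVec_comm]
    exact hoff hkl

theorem total_nonequilibrium_stress_vanishes_general
    (lam : Fin 3 → ℝ) (N : Fin 3 → Fin 3 → ℝ)
    (M : ℕ)
    (Ga : Fin M → Fin 3 → ℝ) (Nbar : Fin M → Fin 3 → Fin 3 → ℝ)
    (hGpos : ∀ α i, 0 < Ga α i) (hGdist : ∀ α, ∀ i j, i ≠ j → Ga α i ≠ Ga α j)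
    (hGON : ∀ α, ∀ i j, Nbar α i ⬝ᵥ Nbar α j = if i = j then (1 : ℝ) else 0)
    (E E' : Fin M → ℝ → ℝ) (Ev Ev' : Fin M → ℝ → ℝ)
    (hEv : ∀ α, ∀ x : ℝ, 0 < x → HasDerivAt (Ev α) (Ev' α x) x)
    (hEv' : ∀ α, ∀ x : ℝ, 0 < x → 0 < Ev' α x)
    (T : Fin M → Matrix (Fin 3) (Fin 3) ℝ) (hT : ∀ α, (T α).IsSymm)
    (heq : ∀ α, projOp (Ga α) (Nbar α) (Ev α) (Ev' α) (T α) = 0) :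
    (∀ α, T α = 0) ∧ (∑ α, projOp lam N (E α) (E' α) (T α)) = 0 := by
  have hT0 (α : Fin M) : T α = 0 :=
    eq_zero_of_projOp_eq_zero (hGON α) (hGpos α) (hGdist α) (hEv α) (hEv' α) (hT α) (heq α)
  exact ⟨hT0, Finset.sum_eq_zero fun α _ => by simp [hT0 α, projOp]⟩

/-- The generalized model with `M ≥ 1` relaxation processes: if each
stress-like tensor `T^α` satisfies the equilibrium condition `𝕼^{v,α}(T^α) = O`, then
every `T^α = O` and the total non-equilibrium stress `Sⁿᵉᑫ = Σ_α 𝕼^α(T^α)` vanishes. -/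
theorem total_nonequilibrium_stress_vanishes
    (C : Matrix (Fin 3) (Fin 3) ℝ) (lam : Fin 3 → ℝ) (N : Fin 3 → Fin 3 → ℝ)
    (hC : C = ∑ i, ((lam i) ^ 2) • vecMulVec (N i) (N i))
    (hpos : ∀ i, 0 < lam i) (hdist : ∀ i j, i ≠ j → lam i ≠ lam j)
    (hON : ∀ i j, N i ⬝ᵥ N j = if i = j then (1 : ℝ) else 0)
    (M : ℕ) (hM : 1 ≤ M)
    (Γ : Fin M → Matrix (Fin 3) (Fin 3) ℝ)
    (Ga : Fin M → Fin 3 → ℝ) (Nbar : Fin M → Fin 3 → Fin 3 → ℝ)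
    (hΓ : ∀ α, Γ α = ∑ i, ((Ga α i) ^ 2) • vecMulVec (Nbar α i) (Nbar α i))
    (hGpos : ∀ α i, 0 < Ga α i) (hGdist : ∀ α, ∀ i j, i ≠ j → Ga α i ≠ Ga α j)
    (hGON : ∀ α, ∀ i j, Nbar α i ⬝ᵥ Nbar α j = if i = j then (1 : ℝ) else 0)
    (E E' : Fin M → ℝ → ℝ) (Ev Ev' : Fin M → ℝ → ℝ)
    (hE : ∀ α, ∀ x : ℝ, 0 < x → HasDerivAt (E α) (E' α x) x)
    (hE' : ∀ α, ∀ x : ℝ, 0 < x → 0 < E' α x)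
    (hEv : ∀ α, ∀ x : ℝ, 0 < x → HasDerivAt (Ev α) (Ev' α x) x)
    (hEv' : ∀ α, ∀ x : ℝ, 0 < x → 0 < Ev' α x)
    (T : Fin M → Matrix (Fin 3) (Fin 3) ℝ) (hT : ∀ α, (T α).IsSymm)
    (heq : ∀ α, projOp (Ga α) (Nbar α) (Ev α) (Ev' α) (T α) = 0) :
    (∀ α, T α = 0) ∧ (∑ α, projOp lam N (E α) (E' α) (T α)) = 0 :=
  total_nonequilibrium_stress_vanishes_general lam N M Ga Nbar hGpos hGdist hGON E E' Ev Ev' hEv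
    hEv' T hT heq
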